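/- For every real k > 0 there exists a positive constant C (depending only on k) such that the following holds: for every real Hilbert space H, every bounded nonnegative selfadjoint operator A : H →L[ℝ] H, every solution w of w'' + A w + w' = 0 with data (w0,w1) ∈ H × H, and every t ≥ 0, (1+t)^k (‖w(t)‖_{E♯}² + t E(w;t)) + ∫₀ᵗ (1+s)^k (⟨A w(s), w(s)⟩ + (1+s)‖w'(s)‖²) ds ≤ C (‖(w0,w1)‖_H² + ∫₀ᵗ (1+s)^{k−1} ‖w(s)‖² ds). -/

import Mathlib

/-!
Write `Q = ⟪A w, w⟫`, `D = ‖w'‖²`, `N = ‖w‖²` and `P = ⟪w', w⟫ + ‖w‖² / 2`. Then `Q + D = E(w)`,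
`Q + D + P = ‖w‖²_{E♯}`, and the equation gives `(Q + D)' = -2 D` and `P' = D - Q`, so the
estimate is a statement about four real functions. For them the weighted Lyapunov functional
`L = (1+s)^(k+1) (Q + D) + 2 (k+1) (1+s)^k (Q + D + P) + 2 k (k+1) (1+s)^(k-1) P + M (Q + D + P)`
satisfies `L' ≤ -(1+s)^k (Q + (1+s) D) + K (1+s)^(k-1) N` with `K = 2 k (k+1) (k+2)`: the
coefficient of `P` is chosen so that `Q` cancels from the `(1+s)^(k-1)` terms, and `M` absorbs the
terms `(1+s)^(k-1) D`, which `(1+s)^(k+1) D` dominates only for large `s`. Integrating `L'` and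
comparing `L(t)` with the weighted energy and `L(0)` with `‖w‖²_{E♯}(0) = ‖(w0, w1)‖²_H` gives the
estimate.
-/

open scoped RealInnerProductSpace

universe u

section DampedWave

variable {H : Type*} [NormedAddCommGroup H] [InnerProductSpace ℝ H] {A : H →L[ℝ] H}
  {w v : ℝ → H} {a : H} {s : ℝ}

theorem hasDerivAt_energy [CompleteSpace H] (hA : IsSelfAdjoint A) (hw : HasDerivAt w (v s) s)
    (hv : HasDerivAt v a s) (hode : a + A (w s) + v s = 0) :
    HasDerivAt (fun s ↦ ⟪A (w s), w s⟫ + ‖v s‖ ^ 2) (-2 * ‖v s‖ ^ 2) s := by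
  have ha : a = -(A (w s) + v s) := eq_neg_of_add_eq_zero_left (by rwa [add_assoc] at hode)
  refine (((A.hasFDerivAt.comp_hasDerivAt s hw).inner ℝ hw).add hv.norm_sq).congr_deriv ?_
  simp only [Function.comp_apply, ha, hA.isSymmetric.apply_clm (v s) (w s), inner_neg_right,
    inner_add_right, real_inner_self_eq_norm_sq, real_inner_comm (A (w s)) (v s)]
  ring

theorem hasDerivAt_inner_add_half_norm_sq (hw : HasDerivAt w (v s) s) (hv : HasDerivAt v a s)
    (hode : a + A (w s) + v s = 0) :
    HasDerivAt (fun s ↦ ⟪v s, w s⟫ + ‖w s‖ ^ 2 / 2) (‖v s‖ ^ 2 - ⟪A (w s), w s⟫) s := by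
  have ha : a = -(A (w s) + v s) := eq_neg_of_add_eq_zero_left (by rwa [add_assoc] at hode)
  refine ((hv.inner ℝ hw).add (hw.norm_sq.div_const 2)).congr_deriv ?_
  simp only [ha, inner_neg_left, inner_add_left, real_inner_self_eq_norm_sq,
    real_inner_comm (v s) (w s)]
  ring

theorem abs_two_mul_inner_le (x y : H) : |2 * ⟪x, y⟫| ≤ ‖x‖ ^ 2 + ‖y‖ ^ 2 := by
  rw [abs_mul, abs_two]
  nlinarith [abs_real_inner_le_norm x y, two_mul_le_add_sq ‖x‖ ‖y‖]

theorem norm_add_half_smul_sq (x y : H) :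
    ‖x + (1 / 2 : ℝ) • y‖ ^ 2 = ‖x‖ ^ 2 + ⟪x, y⟫ + ‖y‖ ^ 2 / 4 := by
  rw [norm_add_sq_real, inner_smul_right, norm_smul, mul_pow]
  norm_num
  ring

end DampedWave

section Weights

variable {k c x : ℝ}

theorem rpow_eq_mul_rpow_sub_one (hx : 0 < x) (k : ℝ) : x ^ k = x * x ^ (k - 1) := by
  conv_lhs => rw [show k = 1 + (k - 1) by ring, Real.rpow_add hx, Real.rpow_one]

theorem mul_rpow_sub_one_le (hk : -1 ≤ k) (hc : 1 ≤ c) (hx : 1 ≤ x) :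
    c * x ^ (k - 1) ≤ x ^ (k + 1) + c ^ (k + 2) := by
  have hx0 : 0 < x := by linarith
  have hsplit : x ^ (k + 1) = x ^ 2 * x ^ (k - 1) := by
    rw [rpow_eq_mul_rpow_sub_one hx0, add_sub_cancel_right, rpow_eq_mul_rpow_sub_one hx0 k]
    ring
  rcases le_total c (x ^ 2) with hcx | hxc
  · have := mul_le_mul_of_nonneg_right hcx (Real.rpow_nonneg hx0.le (k - 1))
    linarith [Real.rpow_nonneg (by linarith : (0 : ℝ) ≤ c) (k + 2)]
  · have h1 : x ^ (k - 1) ≤ x ^ (k + 1) := Real.rpow_le_rpow_of_exponent_le hx (by linarith)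
    have h2 : x ^ (k + 1) ≤ c ^ (k + 1) := Real.rpow_le_rpow hx0.le (by nlinarith) (by linarith)
    have h3 : c ^ (k + 2) = c * c ^ (k + 1) := by
      rw [rpow_eq_mul_rpow_sub_one (by linarith), add_sub_assoc]
      norm_num
    rw [h3]
    nlinarith [Real.rpow_nonneg hx0.le (k + 1)]

theorem hasDerivAt_one_add_rpow {s : ℝ} (p : ℝ) (hs : -1 < s) :
    HasDerivAt (fun s ↦ (1 + s) ^ p) (p * (1 + s) ^ (p - 1)) s := by
  simpa using ((hasDerivAt_id s).const_add 1).rpow_const (p := p)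
    (Or.inl (by dsimp only [id]; linarith))

theorem continuousOn_one_add_rpow (p : ℝ) :
    ContinuousOn (fun s : ℝ ↦ (1 + s) ^ p) (Set.Ici 0) := fun s hs ↦
  (hasDerivAt_one_add_rpow p (by linarith [Set.mem_Ici.mp hs])).continuousAt.continuousWithinAt

end Weights

/-- The functional `L` at time `s`, evaluated at `x = 1 + s`, `q = Q s`, `d = D s`, `p = P s`. -/
noncomputable def lyapunov (k M x q d p : ℝ) : ℝ :=
  x ^ (k + 1) * (q + d) + 2 * (k + 1) * x ^ k * (q + d + p) + 2 * k * (k + 1) * x ^ (k - 1) * p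
    + M * (q + d + p)

noncomputable def lyapunovDeriv (k M x q d p : ℝ) : ℝ :=
  -(k + 1) * x ^ k * (q + d) - 2 * x ^ (k + 1) * d + 2 * k * (k + 1) * x ^ (k - 1) * (2 * d + p)
    + 2 * k * (k + 1) * (k - 1) * x ^ (k - 2) * p - M * (q + d)

section Pointwise

variable {k M x q d n p : ℝ}

theorem le_two_mul_lyapunov (hk : 0 < k) (hx : 1 ≤ x) (hq : 0 ≤ q) (hd : 0 ≤ d)
    (hp : -d ≤ 2 * p) (hM0 : 0 ≤ M)
    (hM : 3 * (2 * k * (k + 1) * (k + 2)) * x ^ (k - 1) ≤ x ^ (k + 1) + M) :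
    x ^ k * ((q + d + p) + (x - 1) * (q + d)) ≤ 2 * lyapunov k M x q d p := by
  have hx0 : 0 < x := by linarith
  have hy := Real.rpow_nonneg hx0.le (k - 1)
  unfold lyapunov
  rw [rpow_eq_mul_rpow_sub_one hx0 (k + 1), add_sub_cancel_right,
    rpow_eq_mul_rpow_sub_one hx0 k] at *
  generalize x ^ (k - 1) = y at *
  have hxy : 0 ≤ x * y := by positivity
  have hkk : 0 ≤ k * (k + 1) := by positivity
  have hF : 0 ≤ q + d + p := by linarith
  nlinarith [mul_le_mul_of_nonneg_right hM hd, mul_nonneg (mul_nonneg hx0.le hxy) hq,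
    mul_nonneg hxy (add_nonneg hq hd), mul_nonneg hxy hF, mul_nonneg (mul_nonneg hk.le hxy) hF,
    mul_nonneg (mul_nonneg hkk hy) (by linarith : 0 ≤ 2 * p + d),
    mul_nonneg hM0 (by linarith : 0 ≤ q + d / 2 + p), mul_nonneg (mul_nonneg hkk hy) hd]

theorem lyapunov_one_le (hk : 0 < k) (hq : 0 ≤ q) (hd : 0 ≤ d) (hp : -d ≤ 2 * p) :
    lyapunov k M 1 q d p ≤ (2 * (k + 1) ^ 2 + 2 + M) * (q + d + p) := by
  simp only [lyapunov, Real.one_rpow, one_mul, mul_one]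
  nlinarith [mul_nonneg (mul_nonneg hk.le (by linarith : 0 ≤ k + 1)) (add_nonneg hq hd)]

theorem lyapunovDeriv_le (hk : 0 < k) (hx : 1 ≤ x) (hq : 0 ≤ q) (hd : 0 ≤ d) (hn : 0 ≤ n)
    (hp : |2 * p - n| ≤ d + n) (hM0 : 0 ≤ M)
    (hM : 3 * (2 * k * (k + 1) * (k + 2)) * x ^ (k - 1) ≤ x ^ (k + 1) + M) :
    lyapunovDeriv k M x q d p ≤
      -(x ^ k * (q + x * d)) + 2 * k * (k + 1) * (k + 2) * (x ^ (k - 1) * n) := by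
  have hx0 : 0 < x := by linarith
  have hz := Real.rpow_nonneg hx0.le (k - 2)
  obtain ⟨hp₁, hp₂⟩ := abs_le.mp hp
  unfold lyapunovDeriv
  rw [rpow_eq_mul_rpow_sub_one hx0 (k + 1), add_sub_cancel_right,
    rpow_eq_mul_rpow_sub_one hx0 k, rpow_eq_mul_rpow_sub_one hx0 (k - 1),
    show k - 1 - 1 = k - 2 by ring] at *
  generalize x ^ (k - 2) = z at *
  have hkp : (k - 1) * p ≤ (k + 1) * (d + n) := by
    rcases le_total 0 p with h | h <;> nlinarith
  have hkzp : (k - 1) * z * p ≤ (k + 1) * (x * z) * (d + n) := by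
    nlinarith [mul_le_mul_of_nonneg_left hkp hz,
      mul_nonneg (mul_nonneg hz (by linarith : 0 ≤ x - 1))
        (mul_nonneg (by linarith : 0 ≤ k + 1) (add_nonneg hd hn))]
  have hxz : 0 ≤ x * z := by positivity
  have hkk : 0 ≤ k * (k + 1) := by positivity
  nlinarith [mul_le_mul_of_nonneg_left hkzp hkk, mul_le_mul_of_nonneg_right hM hd,
    mul_nonneg hM0 hq, mul_nonneg (mul_nonneg hkk hxz) hd, mul_nonneg (mul_nonneg hkk hxz) hn,
    mul_nonneg (mul_nonneg hkk hxz) (by linarith : 0 ≤ d + 2 * n - 2 * p),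
    mul_nonneg (mul_nonneg (mul_nonneg hx0.le hxz) hk.le) hq,
    mul_nonneg (mul_nonneg (mul_nonneg hx0.le hxz) hk.le) hd,
    mul_nonneg (mul_nonneg hx0.le hxz) hd]

end Pointwise

section Integrated

variable {k M t : ℝ} {Q D N P : ℝ → ℝ}

theorem hasDerivAt_lyapunov {s : ℝ} (hs : 0 ≤ s)
    (hE : HasDerivAt (fun s ↦ Q s + D s) (-2 * D s) s) (hP : HasDerivAt P (D s - Q s) s) :
    HasDerivAt (fun s ↦ lyapunov k M (1 + s) (Q s) (D s) (P s))
      (lyapunovDeriv k M (1 + s) (Q s) (D s) (P s)) s := by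
  have hF := hE.add hP
  have hw := fun p ↦ hasDerivAt_one_add_rpow p (by linarith : -1 < s)
  refine (((((hw (k + 1)).mul hE).add (((hw k).const_mul (2 * (k + 1))).mul hF)).add
    (((hw (k - 1)).const_mul (2 * k * (k + 1))).mul hP)).add (hF.const_mul M)).congr_deriv ?_
  simp only [lyapunovDeriv, Pi.add_apply, add_sub_cancel_right, show k - 1 - 1 = k - 2 by ring]
  ring

theorem lyapunov_sub_le_integral (hk : 0 < k) (hM0 : 0 ≤ M)
    (hM : ∀ x ≥ 1, 3 * (2 * k * (k + 1) * (k + 2)) * x ^ (k - 1) ≤ x ^ (k + 1) + M)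
    (hQ : ∀ s, 0 ≤ Q s) (hD : ∀ s, 0 ≤ D s) (hN : ∀ s, 0 ≤ N s)
    (hPN : ∀ s, |2 * P s - N s| ≤ D s + N s) (hQc : Continuous Q) (hDc : Continuous D)
    (hNc : Continuous N) (hE : ∀ s ≥ 0, HasDerivAt (fun s ↦ Q s + D s) (-2 * D s) s)
    (hP : ∀ s ≥ 0, HasDerivAt P (D s - Q s) s) (ht : 0 ≤ t) :
    lyapunov k M (1 + t) (Q t) (D t) (P t) - lyapunov k M 1 (Q 0) (D 0) (P 0) ≤
      -(∫ s in 0..t, (1 + s) ^ k * (Q s + (1 + s) * D s))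
        + 2 * k * (k + 1) * (k + 2) * ∫ s in 0..t, (1 + s) ^ (k - 1) * N s := by
  have hw (p : ℝ) : ContinuousOn (fun s : ℝ ↦ (1 + s) ^ p) (Set.Icc 0 t) :=
    (continuousOn_one_add_rpow p).mono Set.Icc_subset_Ici_self
  have hI : MeasureTheory.IntegrableOn (fun s ↦ (1 + s) ^ k * (Q s + (1 + s) * D s))
      (Set.Icc 0 t) :=
    ((hw k).mul (hQc.add ((continuous_const.add continuous_id).mul hDc)).continuousOn)
      |>.integrableOn_Icc
  have hJ : MeasureTheory.IntegrableOn (fun s ↦ (1 + s) ^ (k - 1) * N s) (Set.Icc 0 t) :=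
    ((hw (k - 1)).mul hNc.continuousOn).integrableOn_Icc
  have hL (s : ℝ) (hs : s ∈ Set.Icc 0 t) :=
    hasDerivAt_lyapunov (k := k) (M := M) hs.1 (hE s hs.1) (hP s hs.1)
  rw [← intervalIntegral.integral_neg, ← intervalIntegral.integral_const_mul,
    ← intervalIntegral.integral_add]
  · simpa using intervalIntegral.sub_le_integral_of_hasDeriv_right_of_le ht
      (fun s hs ↦ (hL s hs).continuousAt.continuousWithinAt)
      (fun s hs ↦ (hL s (Set.Ioo_subset_Icc_self hs)).hasDerivWithinAt)
      (hI.neg.add (hJ.const_mul _))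
      (fun s hs ↦ lyapunovDeriv_le hk (by linarith [hs.1]) (hQ s) (hD s) (hN s) (hPN s) hM0
        (hM _ (by linarith [hs.1])))
  · exact ((intervalIntegrable_iff_integrableOn_Icc_of_le ht).mpr hI).neg
  · exact ((intervalIntegrable_iff_integrableOn_Icc_of_le ht).mpr hJ).const_mul _

theorem exists_weighted_energy_estimate (hk : 0 < k) :
    ∃ C, 0 < C ∧ ∀ Q D N P : ℝ → ℝ, (∀ s, 0 ≤ Q s) → (∀ s, 0 ≤ D s) → (∀ s, 0 ≤ N s) →
      (∀ s, |2 * P s - N s| ≤ D s + N s) → Continuous Q → Continuous D → Continuous N →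
      (∀ s ≥ 0, HasDerivAt (fun s ↦ Q s + D s) (-2 * D s) s) →
      (∀ s ≥ 0, HasDerivAt P (D s - Q s) s) → ∀ t ≥ 0,
        (1 + t) ^ k * ((Q t + D t + P t) + t * (Q t + D t))
            + ∫ s in 0..t, (1 + s) ^ k * (Q s + (1 + s) * D s)
          ≤ C * ((Q 0 + D 0 + P 0) + ∫ s in 0..t, (1 + s) ^ (k - 1) * N s) := by
  set K := 2 * k * (k + 1) * (k + 2)
  set M := (3 * K + 1) ^ (k + 2)
  have hK : 0 < K := by positivity
  have hM0 : 0 ≤ M := by positivity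
  have hM (x : ℝ) (hx : 1 ≤ x) : 3 * K * x ^ (k - 1) ≤ x ^ (k + 1) + M := by
    have := mul_rpow_sub_one_le (k := k) (c := 3 * K + 1) (by linarith) (by linarith) hx
    nlinarith [Real.rpow_nonneg (by linarith : (0 : ℝ) ≤ x) (k - 1)]
  refine ⟨2 * (2 * (k + 1) ^ 2 + 2 + M) + 2 * K, by positivity, ?_⟩
  intro Q D N P hQ hD hN hPN hQc hDc hNc hE hP t ht
  have hp (s : ℝ) : -D s ≤ 2 * P s := by linarith [(abs_le.mp (hPN s)).1]
  have hI : 0 ≤ ∫ s in 0..t, (1 + s) ^ k * (Q s + (1 + s) * D s) :=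
    intervalIntegral.integral_nonneg ht fun s hs ↦ by
      have := hs.1; have := hQ s; have := hD s; positivity
  have hJ : 0 ≤ ∫ s in 0..t, (1 + s) ^ (k - 1) * N s :=
    intervalIntegral.integral_nonneg ht fun s hs ↦ by have := hs.1; have := hN s; positivity
  have hF0 : 0 ≤ Q 0 + D 0 + P 0 := by linarith [hp 0, hQ 0, hD 0]
  have hdecay := lyapunov_sub_le_integral hk hM0 hM hQ hD hN hPN hQc hDc hNc hE hP ht
  have hfinal := le_two_mul_lyapunov hk (by linarith : 1 ≤ 1 + t) (hQ t) (hD t) (hp t) hM0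
    (hM _ (by linarith))
  have hinit := lyapunov_one_le (M := M) hk (hQ 0) (hD 0) (hp 0)
  rw [add_sub_cancel_left] at hfinal
  linarith [mul_nonneg hK.le hF0, mul_nonneg (by positivity : 0 ≤ 2 * (k + 1) ^ 2 + 2 + M) hJ]

end Integrated

theorem stmt_5 :
    ∀ k : ℝ, 0 < k → ∃ C : ℝ, 0 < C ∧
      ∀ (H : Type u) [NormedAddCommGroup H] [InnerProductSpace ℝ H] [CompleteSpace H]
        (A : H →L[ℝ] H), IsSelfAdjoint A → (∀ x : H, 0 ≤ ⟪A x, x⟫) →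
        ∀ (w : ℝ → H) (w0 w1 : H), ContDiff ℝ 2 w →
          (∀ t ≥ (0:ℝ), deriv (deriv w) t + A (w t) + deriv w t = 0) →
          w 0 = w0 → deriv w 0 = w1 →
          ∀ t ≥ (0:ℝ),
            (1 + t) ^ k *
                ((⟪A (w t), w t⟫ + ‖deriv w t + (1 / 2 : ℝ) • w t‖ ^ 2
                    + (1 / 4) * ‖w t‖ ^ 2)
                  + t * (‖deriv w t‖ ^ 2 + ⟪A (w t), w t⟫))
              + ∫ s in (0:ℝ)..t,
                  (1 + s) ^ k * (⟪A (w s), w s⟫ + (1 + s) * ‖deriv w s‖ ^ 2)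
            ≤ C * ((⟪A w0, w0⟫ + (1 / 4) * ‖w0‖ ^ 2 + ‖w1 + (1 / 2 : ℝ) • w0‖ ^ 2)
                + ∫ s in (0:ℝ)..t, (1 + s) ^ (k - 1) * ‖w s‖ ^ 2) := by
  intro k hk
  obtain ⟨C, hC, hest⟩ := exists_weighted_energy_estimate hk
  refine ⟨C, hC, fun H _ _ _ A hA hA0 w w0 w1 hw hode hw0 hw1 t ht ↦ ?_⟩
  subst hw0 hw1
  have hw' (s : ℝ) : HasDerivAt w (deriv w s) s :=
    ((hw.differentiable (by norm_num)) s).hasDerivAt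
  have hw'' (s : ℝ) : HasDerivAt (deriv w) (deriv (deriv w) s) s :=
    (hw.differentiable_deriv_two s).hasDerivAt
  have hscalar := hest (fun s ↦ ⟪A (w s), w s⟫) (fun s ↦ ‖deriv w s‖ ^ 2) (fun s ↦ ‖w s‖ ^ 2)
    (fun s ↦ ⟪deriv w s, w s⟫ + ‖w s‖ ^ 2 / 2) (fun s ↦ hA0 _) (fun s ↦ sq_nonneg _)
    (fun s ↦ sq_nonneg _) (fun s ↦ by convert abs_two_mul_inner_le (deriv w s) (w s) using 2; ring)
    ((A.continuous.comp hw.continuous).inner hw.continuous)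
    ((hw.continuous_deriv (by norm_num)).norm.pow 2) (hw.continuous.norm.pow 2)
    (fun s hs ↦ hasDerivAt_energy hA (hw' s) (hw'' s) (hode s hs))
    (fun s hs ↦ hasDerivAt_inner_add_half_norm_sq (hw' s) (hw'' s) (hode s hs)) t ht
  rw [norm_add_half_smul_sq, norm_add_half_smul_sq]
  convert hscalar using 3 <;> ring
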